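/- In the Hilbert-style system IEL (intuitionistic propositional logic plus axioms K(F→G)→(KF→KG), F→KF, ¬K⊥, with modus ponens), the reflection principle for negative formulas K¬F → ¬F is provable. -/
import Mathlib


inductive Fm : Type
  | var : ℕ → Fm
  | bot : Fm
  | and : Fm → Fm → Fm
  | or  : Fm → Fm → Fm
  | imp : Fm → Fm → Fm
  | K   : Fm → Fm
deriving DecidableEq

/-- ¬F abbreviates F → ⊥. -/
def Fm.neg (F : Fm) : Fm := F.imp .bot

/-- A is a propositional variable or ⊥. -/
def Fm.isAtom (A : Fm) : Prop := A = Fm.bot ∨ ∃ n, A = Fm.var n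

/-- K applied to each member of a multiset. -/
def Kset (Γ : Multiset Fm) : Multiset Fm := Γ.map Fm.K
/-- The Hilbert system IEL: intuitionistic propositional axioms, distribution,
co-reflection, consistency, modus ponens. -/
inductive IEL : Fm → Prop
  | a1 (F G : Fm) : IEL (F.imp (G.imp F))
  | a2 (F G H : Fm) : IEL ((F.imp (G.imp H)).imp ((F.imp G).imp (F.imp H)))
  | a3 (F G : Fm) : IEL ((F.and G).imp F)
  | a4 (F G : Fm) : IEL ((F.and G).imp G)
  | a5 (F G : Fm) : IEL (F.imp (G.imp (F.and G)))
  | a6 (F G : Fm) : IEL (F.imp (F.or G))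
  | a7 (F G : Fm) : IEL (G.imp (F.or G))
  | a8 (F G H : Fm) : IEL ((F.imp H).imp ((G.imp H).imp ((F.or G).imp H)))
  | a9 (F : Fm) : IEL (Fm.bot.imp F)
  | dist (F G : Fm) : IEL ((Fm.K (F.imp G)).imp ((Fm.K F).imp (Fm.K G)))
  | coref (F : Fm) : IEL (F.imp (Fm.K F))
  | consist : IEL (Fm.K Fm.bot).neg
  | mp (F G : Fm) : IEL (F.imp G) → IEL F → IEL G

/-- Conjunction of a list of formulas (empty conjunction is ⊤ := ⊥ → ⊥). -/
def conjList (Γ : List Fm) : Fm := Γ.foldr Fm.and (Fm.bot.imp Fm.bot)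

lemma IEL.liftK {a f : Fm} (h : IEL f) : IEL (a.imp f) :=
  IEL.mp _ _ (IEL.a1 f a) h

lemma IEL.ap {a b c : Fm} (h1 : IEL (a.imp (b.imp c))) (h2 : IEL (a.imp b)) :
    IEL (a.imp c) :=
  IEL.mp _ _ (IEL.mp _ _ (IEL.a2 a b c) h1) h2

lemma IEL.comp {f g h : Fm} (h1 : IEL (g.imp h)) (h2 : IEL (f.imp g)) :
    IEL (f.imp h) :=
  IEL.ap (IEL.liftK h1) h2

lemma IEL.ap2 {a f x y : Fm} (h1 : IEL (a.imp (f.imp (x.imp y))))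
    (h2 : IEL (a.imp (f.imp x))) : IEL (a.imp (f.imp y)) :=
  IEL.ap (IEL.ap (IEL.liftK (IEL.a2 f x y)) h1) h2

/-- Reflection for negative formulas is provable in IEL: K¬F → ¬F. -/
theorem stmt0 (F : Fm) : IEL ((Fm.K F.neg).imp F.neg) := by
  have d1 : IEL ((Fm.K F.neg).imp ((Fm.K F).imp (Fm.K Fm.bot))) :=
    IEL.dist F Fm.bot
  have e1 : IEL ((Fm.K F.neg).imp (F.imp (Fm.K F))) := IEL.liftK (IEL.coref F)
  have e2 : IEL ((Fm.K F.neg).imp (F.imp (Fm.K Fm.bot))) :=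
    IEL.ap2 (IEL.comp (IEL.a1 _ F) d1) e1
  have e3 : IEL ((Fm.K F.neg).imp (F.imp ((Fm.K Fm.bot).imp Fm.bot))) :=
    IEL.liftK (IEL.liftK IEL.consist)
  exact IEL.ap2 e3 e2
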